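/- arXiv:1904.00033 — 4 statements merged into one kernel-verified Lean document; each statement's English description precedes it below -/
import Mathlib

section
/- Let R be a regular S-graded ring such that S satisfies condition (Δ). Then the graded Brown–McCoy radical of R equals R, i.e., 𝒢(R) = R, if and only if every homogeneous element of R is G-regular. -/
/-!
Common framework: S-graded rings (rings that are direct sums of additive
subgroups indexed by a set S, with homogeneous products homogeneous),
homogeneous ideals, graded modules, and the various Brown--McCoy radicals.
-/

universe u v w

/-- An `S`-graded ring structure on a (not necessarily unital or commutative)
associative ring `R`: a family of additive subgroups indexed by a nonempty set `S`
whose internal direct sum is `R`, such that whenever `R_s · R_t ≠ 0` there is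
`u ∈ S` with `R_s · R_t ⊆ R_u`. -/
structure SGraded (S : Type v) (R : Type w) [NonUnitalRing R] where
  component : S → AddSubgroup R
  nonemptyS : Nonempty S
  independent : iSupIndep component
  iSup_eq_top : (⨆ s, component s) = ⊤
  mul_cond : ∀ s t : S, (∃ a ∈ component s, ∃ b ∈ component t, a * b ≠ 0) →
    ∃ u : S, ∀ a ∈ component s, ∀ b ∈ component t, a * b ∈ component u

namespace SGraded

variable {S : Type v} {R : Type w} [NonUnitalRing R] (G : SGraded S R)

/-- A homogeneous element. -/
def Homog (a : R) : Prop := ∃ s, a ∈ G.component s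

/-- The homogeneous part `A = ⋃ s, R_s` of `R`. -/
def homogPart : Set R := {a : R | G.Homog a}

/-- Two homogeneous elements are addable if one is `0` or they have the same degree. -/
def Addable (a b : R) : Prop := a = 0 ∨ b = 0 ∨ ∃ s, a ∈ G.component s ∧ b ∈ G.component s

/-- `ε ∈ S` is idempotent: `R_ε · R_ε ≠ 0` and `R_ε · R_ε ⊆ R_ε`. -/
def IsIdem (ε : S) : Prop :=
  (∃ a ∈ G.component ε, ∃ b ∈ G.component ε, a * b ≠ 0) ∧
  ∀ a ∈ G.component ε, ∀ b ∈ G.component ε, a * b ∈ G.component ε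

/-- Condition (Δ): the product of two nonidempotent degrees is never idempotent. -/
def CondDelta : Prop := ∀ s t u : S,
  (∃ a ∈ G.component s, ∃ b ∈ G.component t, a * b ≠ 0) →
  (∀ a ∈ G.component s, ∀ b ∈ G.component t, a * b ∈ G.component u) →
  ¬ G.IsIdem s → ¬ G.IsIdem t → ¬ G.IsIdem u

/-- Regularity (cancellativity) of the grading. -/
def Regular : Prop := ∀ a b c : R, G.Homog a → G.Homog b → G.Homog c →
  a ≠ 0 → b ≠ 0 → c ≠ 0 →
  ((a * c ≠ 0 → b * c ≠ 0 → G.Addable (a * c) (b * c) → G.Addable a b) ∧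
   (c * a ≠ 0 → c * b ≠ 0 → G.Addable (c * a) (c * b) → G.Addable a b))

end SGraded

section Rings

variable {R : Type w} [NonUnitalRing R]

/-- A right ideal of `R`, as an additive subgroup. -/
def IsRightIdeal (I : AddSubgroup R) : Prop := ∀ x ∈ I, ∀ r : R, x * r ∈ I

/-- A two-sided ideal of `R`, as an additive subgroup. -/
def IsTwoSidedIdeal' (I : AddSubgroup R) : Prop := ∀ x ∈ I, ∀ r : R, x * r ∈ I ∧ r * x ∈ I

/-- The right ideal of `R` generated by a set. -/
def rightIdealGen (T : Set R) : AddSubgroup R :=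
  sInf {I : AddSubgroup R | T ⊆ I ∧ IsRightIdeal I}

/-- A right ideal of the (sub)ring `E`, as an additive subgroup of `R` contained in `E`. -/
def IsRightIdealOn (E I : AddSubgroup R) : Prop := I ≤ E ∧ ∀ x ∈ I, ∀ r ∈ E, x * r ∈ I

/-- A two-sided ideal of the (sub)ring `E`. -/
def IsIdealOn (E I : AddSubgroup R) : Prop :=
  I ≤ E ∧ ∀ x ∈ I, ∀ r ∈ E, x * r ∈ I ∧ r * x ∈ I

/-- The largest two-sided ideal of the (sub)ring `E` contained in `J`. -/
def coreOn (E J : AddSubgroup R) : AddSubgroup R :=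
  sSup {K : AddSubgroup R | IsIdealOn E K ∧ K ≤ J}

/-- A maximal right ideal of the (sub)ring `E`. -/
def IsMaxRightIdealOn (E J : AddSubgroup R) : Prop :=
  IsRightIdealOn E J ∧ J ≠ E ∧ ∀ K : AddSubgroup R, IsRightIdealOn E K → J < K → K ≤ E → K = E

/-- A modular two-sided ideal of the (sub)ring `E`:
there is `e ∈ E` with `ea - a ∈ J` and `ae - a ∈ J` for all `a ∈ E`. -/
def IsModularIdealOn (E J : AddSubgroup R) : Prop :=
  ∃ e ∈ E, ∀ a ∈ E, e * a - a ∈ J ∧ a * e - a ∈ J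

/-- The classical Brown--McCoy radical of the (sub)ring `E`: the intersection of all
two-sided ideals `I` of `E` such that `E/I` is a simple ring with identity. -/
def brownMcCoyOn (E : AddSubgroup R) : Set R :=
  {a : R | a ∈ E ∧ ∀ I : AddSubgroup R, IsIdealOn E I → I ≠ E →
    IsModularIdealOn E I →
    (∀ K : AddSubgroup R, IsIdealOn E K → I ≤ K → K ≤ E → K = I ∨ K = E) → a ∈ I}

/-- `e` is a unity modulo `I`. -/
def IsUnityMod (e : R) (I : AddSubgroup R) : Prop := ∀ a : R, e * a - a ∈ I ∧ a * e - a ∈ I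

/-- `x` is a G-regular element of the (sub)ring `E`: there is no proper two-sided
ideal `I` of `E` such that `x` is a unity modulo `I`. -/
def GRegularOn (E : AddSubgroup R) (x : R) : Prop :=
  ∀ I : AddSubgroup R, IsIdealOn E I → I ≠ E →
    ¬ (∀ a ∈ E, x * a - a ∈ I ∧ a * x - a ∈ I)

end Rings

namespace SGraded

variable {S : Type v} {R : Type w} [NonUnitalRing R] (G : SGraded S R)

/-- An additive subgroup generated (as an additive group) by its homogeneous elements. -/
def IsHomSubgroup (I : AddSubgroup R) : Prop :=
  I = AddSubgroup.closure {a : R | a ∈ I ∧ G.Homog a}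

/-- A homogeneous right ideal of `R`. -/
def IsHomRightIdeal (I : AddSubgroup R) : Prop := IsRightIdeal I ∧ G.IsHomSubgroup I

/-- A homogeneous (two-sided) ideal of `R`. -/
def IsHomIdeal (I : AddSubgroup R) : Prop := IsTwoSidedIdeal' I ∧ G.IsHomSubgroup I

/-- `Ǐ`: the largest homogeneous ideal of `R` contained in `I`. -/
def core (I : AddSubgroup R) : AddSubgroup R :=
  sSup {J : AddSubgroup R | G.IsHomIdeal J ∧ J ≤ I}

/-- A homogeneous right ideal, maximal among the proper homogeneous right ideals of `R`. -/
def IsMaxHomRightIdeal (I : AddSubgroup R) : Prop :=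
  G.IsHomRightIdeal I ∧ I ≠ ⊤ ∧ ∀ K : AddSubgroup R, G.IsHomRightIdeal K → I < K → K = ⊤

/-- A modular homogeneous ideal of `R`: a homogeneous ideal admitting a homogeneous
unity modulo it. -/
def IsModularHomIdeal (I : AddSubgroup R) : Prop :=
  G.IsHomIdeal I ∧ ∃ e, G.Homog e ∧ IsUnityMod e I

/-- A homogeneous element is G-regular if it is a unity modulo no proper homogeneous
ideal of `R`. -/
def GRegular (x : R) : Prop :=
  ∀ I : AddSubgroup R, G.IsHomIdeal I → I ≠ ⊤ → ¬ IsUnityMod x I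

/-- The quotient graded ring `R/J` (graded by the images of the components) is a
regular simple graded ring whose identity is the image of a homogeneous element:
`R/J` is nonzero, regular, has an identity which is the image of a homogeneous
element of `R`, and has no homogeneous ideals other than `0` and `R/J`. -/
def QuotInM (J : AddSubgroup R) : Prop :=
  J ≠ ⊤ ∧
  (∃ e, G.Homog e ∧ IsUnityMod e J) ∧
  (∀ K : AddSubgroup R, G.IsHomIdeal K → J ≤ K → K = J ∨ K = ⊤) ∧
  (∀ a b c : R, G.Homog a → G.Homog b → G.Homog c → a ∉ J → b ∉ J → c ∉ J →
    ((a * c ∉ J → b * c ∉ J → G.Addable (a * c) (b * c) → G.Addable a b) ∧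
     (c * a ∉ J → c * b ∉ J → G.Addable (c * a) (c * b) → G.Addable a b)))

/-- The graded Brown--McCoy radical `𝒢(R)`: the intersection of all homogeneous right
ideals `I`, maximal among the proper homogeneous right ideals, such that `R/Ǐ` is a
regular simple graded ring with identity the image of a homogeneous element. -/
def gradedBM : Set R :=
  {a : R | ∀ I : AddSubgroup R, G.IsMaxHomRightIdeal I → G.QuotInM (G.core I) → a ∈ I}

/-- The quotient right `R`-module `R/J` (graded by the images of the components) is a
graded-simple graded right `R`-module, phrased inside `R`. -/
def QuotGradedSimple (J : AddSubgroup R) : Prop :=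
  (∃ x a : R, G.Homog x ∧ G.Homog a ∧ x * a ∉ J) ∧
  (∀ K : AddSubgroup R, G.IsHomRightIdeal K → J ≤ K → K = J ∨ K = ⊤) ∧
  (∀ I : AddSubgroup R, G.IsHomIdeal I → (∃ r : R, ∃ b ∈ I, r * b ∉ J) →
    ∃ b ∈ I, ∀ x : R, G.Homog x → x * b - x ∈ J)

end SGraded

/-- A graded right module over an `S`-graded ring `R`: a right `R`-module structure on
an additive commutative group `M` together with a family of additive subgroups indexed
by a nonempty set `D` whose internal direct sum is `M` and with `M_d · R_s ⊆ M_t`. -/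
structure GradedRightModule {S : Type v} {R : Type w} [NonUnitalRing R]
    (G : SGraded S R) (M : Type u) [AddCommGroup M] where
  smul : M → R → M
  add_smul : ∀ (x y : M) (a : R), smul (x + y) a = smul x a + smul y a
  smul_add : ∀ (x : M) (a b : R), smul x (a + b) = smul x a + smul x b
  smul_mul : ∀ (x : M) (a b : R), smul x (a * b) = smul (smul x a) b
  D : Type u
  nonemptyD : Nonempty D
  mcomp : D → AddSubgroup M
  mindependent : iSupIndep mcomp
  miSup_eq_top : (⨆ d, mcomp d) = ⊤
  graded : ∀ (d : D) (s : S), ∃ t : D, ∀ x ∈ mcomp d, ∀ r ∈ G.component s, smul x r ∈ mcomp t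

namespace GradedRightModule

variable {S : Type v} {R : Type w} [NonUnitalRing R] {G : SGraded S R}
  {M : Type u} [AddCommGroup M] (gm : GradedRightModule G M)

/-- A homogeneous element of `M`. -/
def HomogM (x : M) : Prop := ∃ d, x ∈ gm.mcomp d

/-- Addability of homogeneous elements of `M`. -/
def AddableM (x y : M) : Prop := x = 0 ∨ y = 0 ∨ ∃ d, x ∈ gm.mcomp d ∧ y ∈ gm.mcomp d

/-- A homogeneous submodule of `M`: a submodule generated (as an additive group)
by its homogeneous elements. -/
def IsHomSubmodule (N : AddSubgroup M) : Prop :=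
  (∀ x ∈ N, ∀ r : R, gm.smul x r ∈ N) ∧
  N = AddSubgroup.closure {x : M | x ∈ N ∧ gm.HomogM x}

/-- `M` is graded-irreducible. -/
def GradedIrreducible : Prop :=
  (∃ (x : M) (a : R), gm.HomogM x ∧ G.Homog a ∧ gm.smul x a ≠ 0) ∧
  ∀ N : AddSubgroup M, gm.IsHomSubmodule N → N = ⊥ ∨ N = ⊤

/-- `M` is graded-simple: graded-irreducible and for every homogeneous ideal `I` of `R`
with `M·I ≠ 0` there is `b ∈ I` acting as identity on all homogeneous elements of `M`. -/
def GradedSimple : Prop :=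
  gm.GradedIrreducible ∧
  ∀ I : AddSubgroup R, G.IsHomIdeal I → (∃ x : M, ∃ b ∈ I, gm.smul x b ≠ 0) →
    ∃ b ∈ I, ∀ x : M, gm.HomogM x → gm.smul x b = x

/-- `M` is a regular graded module. -/
def ModRegular : Prop :=
  ∀ (x : M) (a b : R), gm.HomogM x → G.Homog a → G.Homog b →
    gm.smul x a ≠ 0 → gm.smul x b ≠ 0 →
    gm.AddableM (gm.smul x a) (gm.smul x b) → G.Addable a b

end GradedRightModule

/-- The large graded Brown--McCoy radical `G_l(R)`: the homogeneous elements
annihilating every graded-simple graded right `R`-module. -/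
def largeGradedBM {S : Type v} {R : Type w} [NonUnitalRing R] (G : SGraded S R) : Set R :=
  {a : R | G.Homog a ∧ ∀ (M : Type u) [AddCommGroup M] (gm : GradedRightModule G M),
    gm.GradedSimple → ∀ x : M, gm.smul x a = 0}

variable {S : Type v} {R : Type w} [NonUnitalRing R]

/-!
If a homogeneous `x` is a unity modulo a proper homogeneous ideal `I`, Zorn's lemma gives a
homogeneous ideal `M ⊇ I` maximal with `x ∉ M`, and then a homogeneous right ideal `N ⊇ M`
maximal with `x ∉ N`. Every homogeneous right ideal containing `x` is all of `R`, because `x` is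
a left unity modulo `M`; hence `N` is a maximal homogeneous right ideal, `Ň = M`, and `R/M` is
graded-simple with identity `x` (regularity passes to `R/M` as it is phrased through the degrees
in `R`). So `x ∉ 𝒢(R)`. Conversely, the identity of each quotient `R/Ǐ` occurring in the
definition of `𝒢(R)` is a homogeneous unity modulo the proper homogeneous ideal `Ǐ`, so if
all homogeneous elements are G-regular no such `I` exists and `𝒢(R) = R`.
-/

theorem isRightIdeal_sSup {T : Set (AddSubgroup R)} (h : ∀ J ∈ T, IsRightIdeal J) :
    IsRightIdeal (sSup T) := by
  intro x hx r
  have hle : sSup T ≤ (sSup T).comap (AddMonoidHom.mulRight r) :=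
    sSup_le fun J hJ y hy => le_sSup hJ (h J hJ y hy r)
  exact hle hx

theorem isTwoSidedIdeal'_sSup {T : Set (AddSubgroup R)} (h : ∀ J ∈ T, IsTwoSidedIdeal' J) :
    IsTwoSidedIdeal' (sSup T) := by
  intro x hx r
  have hright : sSup T ≤ (sSup T).comap (AddMonoidHom.mulRight r) :=
    sSup_le fun J hJ y hy => le_sSup hJ (h J hJ y hy r).1
  have hleft : sSup T ≤ (sSup T).comap (AddMonoidHom.mulLeft r) :=
    sSup_le fun J hJ y hy => le_sSup hJ (h J hJ y hy r).2
  exact ⟨hright hx, hleft hx⟩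

theorem IsTwoSidedIdeal'.isRightIdeal {I : AddSubgroup R} (hI : IsTwoSidedIdeal' I) :
    IsRightIdeal I := fun x hx r => (hI x hx r).1

theorem IsUnityMod.mono {e : R} {I J : AddSubgroup R} (he : IsUnityMod e I) (hIJ : I ≤ J) :
    IsUnityMod e J := fun a => ⟨hIJ (he a).1, hIJ (he a).2⟩

theorem IsRightIdeal.eq_top_of_mem_of_mul_sub_mem {K : AddSubgroup R} (hK : IsRightIdeal K)
    {x : R} (hxK : x ∈ K) (hx : ∀ a, x * a - a ∈ K) : K = ⊤ :=
  (AddSubgroup.eq_top_iff' K).2 fun a => by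
    simpa using sub_mem (hK x hxK a) (hx a)

theorem AddSubgroup.exists_le_maximal_of_notMem {A : Type*} [AddGroup A]
    {P : AddSubgroup A → Prop}
    (hP : ∀ T : Set (AddSubgroup A), (∀ J ∈ T, P J) → P (sSup T))
    {I : AddSubgroup A} {x : A} (hI : P I) (hxI : x ∉ I) :
    ∃ M, I ≤ M ∧ Maximal (fun K => P K ∧ x ∉ K) M := by
  refine zorn_le_nonempty₀ {K | P K ∧ x ∉ K} (fun c hc hchain y hy => ?_) I ⟨hI, hxI⟩
  refine ⟨sSup c, ⟨hP c fun J hJ => (hc hJ).1, fun hx => ?_⟩, fun _ => le_sSup⟩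
  obtain ⟨J, hJ, hxJ⟩ := (AddSubgroup.mem_sSup_of_directedOn ⟨y, hy⟩ hchain.directedOn).1 hx
  exact (hc hJ).2 hxJ

/-- Any right ideal containing `x` is `⊤`, so `M` is maximal among all `K` with `P K`. -/
theorem eq_or_eq_top_of_maximal_notMem {P : AddSubgroup R → Prop}
    (hP : ∀ K, P K → IsRightIdeal K) {M : AddSubgroup R} {x : R}
    (hM : Maximal (fun K => P K ∧ x ∉ K) M) (hx : ∀ a, x * a - a ∈ M)
    {K : AddSubgroup R} (hK : P K) (hMK : M ≤ K) : K = M ∨ K = ⊤ := by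
  by_cases hxK : x ∈ K
  · exact Or.inr ((hP K hK).eq_top_of_mem_of_mul_sub_mem hxK fun a => hMK (hx a))
  · exact Or.inl (le_antisymm (hM.2 ⟨hK, hxK⟩ hMK) hMK)

namespace SGraded

variable (G : SGraded S R)

theorem isHomSubgroup_sSup {T : Set (AddSubgroup R)} (h : ∀ J ∈ T, G.IsHomSubgroup J) :
    G.IsHomSubgroup (sSup T) := by
  refine le_antisymm (sSup_le fun J hJ => ?_) ((AddSubgroup.closure_le _).2 fun _ ha => ha.1)
  rw [h J hJ]
  exact AddSubgroup.closure_mono fun a ha => ⟨le_sSup hJ ha.1, ha.2⟩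

theorem isHomIdeal_sSup {T : Set (AddSubgroup R)} (h : ∀ J ∈ T, G.IsHomIdeal J) :
    G.IsHomIdeal (sSup T) :=
  ⟨isTwoSidedIdeal'_sSup fun J hJ => (h J hJ).1, G.isHomSubgroup_sSup fun J hJ => (h J hJ).2⟩

theorem isHomRightIdeal_sSup {T : Set (AddSubgroup R)} (h : ∀ J ∈ T, G.IsHomRightIdeal J) :
    G.IsHomRightIdeal (sSup T) :=
  ⟨isRightIdeal_sSup fun J hJ => (h J hJ).1, G.isHomSubgroup_sSup fun J hJ => (h J hJ).2⟩

theorem IsHomIdeal.isHomRightIdeal {G : SGraded S R} {I : AddSubgroup R} (hI : G.IsHomIdeal I) :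
    G.IsHomRightIdeal I :=
  ⟨hI.1.isRightIdeal, hI.2⟩

theorem core_isHomIdeal (I : AddSubgroup R) : G.IsHomIdeal (G.core I) :=
  G.isHomIdeal_sSup fun _ hJ => hJ.1

theorem core_le (I : AddSubgroup R) : G.core I ≤ I :=
  sSup_le fun _ hJ => hJ.2

theorem le_core {I J : AddSubgroup R} (hJ : G.IsHomIdeal J) (hJI : J ≤ I) : J ≤ G.core I :=
  le_sSup ⟨hJ, hJI⟩

theorem quotInM_of_regular (hreg : G.Regular) {J : AddSubgroup R} (hJ : J ≠ ⊤)
    {e : R} (he : G.Homog e) (heJ : IsUnityMod e J)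
    (hsimple : ∀ K : AddSubgroup R, G.IsHomIdeal K → J ≤ K → K = J ∨ K = ⊤) :
    G.QuotInM J := by
  refine ⟨hJ, ⟨e, he, heJ⟩, hsimple, fun a b c ha hb hc haJ hbJ hcJ => ?_⟩
  have ne_zero {y : R} (hy : y ∉ J) : y ≠ 0 := fun h0 => hy (h0 ▸ zero_mem J)
  have hr := hreg a b c ha hb hc (ne_zero haJ) (ne_zero hbJ) (ne_zero hcJ)
  exact ⟨fun hac hbc => hr.1 (ne_zero hac) (ne_zero hbc),
    fun hca hcb => hr.2 (ne_zero hca) (ne_zero hcb)⟩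

theorem exists_isMaxHomRightIdeal_quotInM_core_notMem (hreg : G.Regular) {x : R}
    (hx : G.Homog x) (hnot : ¬ G.GRegular x) :
    ∃ N, G.IsMaxHomRightIdeal N ∧ G.QuotInM (G.core N) ∧ x ∉ N := by
  simp only [GRegular, not_forall, not_not] at hnot
  obtain ⟨I, hI, hItop, hxI⟩ := hnot
  have hxI' : x ∉ I := fun hmem =>
    hItop (hI.1.isRightIdeal.eq_top_of_mem_of_mul_sub_mem hmem fun a => (hxI a).1)
  obtain ⟨M, hIM, hM⟩ :=
    AddSubgroup.exists_le_maximal_of_notMem (fun _ => G.isHomIdeal_sSup) hI hxI'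
  have hxM : IsUnityMod x M := hxI.mono hIM
  obtain ⟨N, hMN, hN⟩ := AddSubgroup.exists_le_maximal_of_notMem
    (fun _ => G.isHomRightIdeal_sSup) hM.1.1.isHomRightIdeal hM.1.2
  have hNmax : G.IsMaxHomRightIdeal N := by
    refine ⟨hN.1.1, fun htop => hN.1.2 (htop ▸ AddSubgroup.mem_top x), fun K hK hNK => ?_⟩
    exact (eq_or_eq_top_of_maximal_notMem (fun _ h => h.1) hN (fun a => hMN (hxM a).1) hK
      hNK.le).resolve_left hNK.ne'
  have hcore : G.core N = M := by
    have hMcore : M ≤ G.core N := G.le_core hM.1.1 hMN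
    exact le_antisymm (hM.2 ⟨G.core_isHomIdeal N, fun h => hN.1.2 (G.core_le N h)⟩ hMcore)
      hMcore
  refine ⟨N, hNmax, hcore ▸ G.quotInM_of_regular hreg ?_ hx hxM ?_, hN.1.2⟩
  · exact fun htop => hM.1.2 (htop ▸ AddSubgroup.mem_top x)
  · exact fun K hK => eq_or_eq_top_of_maximal_notMem (fun _ h => h.1.isRightIdeal) hM
      (fun a => (hxM a).1) hK

end SGraded

theorem gradedBM_eq_univ_iff_general (G : SGraded S R) (hreg : G.Regular) :
    G.gradedBM = Set.univ ↔ ∀ x : R, G.Homog x → G.GRegular x := by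
  constructor
  · intro h x hx
    by_contra hnot
    obtain ⟨N, hN, hQ, hxN⟩ := G.exists_isMaxHomRightIdeal_quotInM_core_notMem hreg hx hnot
    exact hxN ((h ▸ Set.mem_univ x : x ∈ G.gradedBM) N hN hQ)
  · intro h
    refine Set.eq_univ_of_forall fun _ I _ hQ => absurd hQ ?_
    rintro ⟨hne, ⟨e, he, heI⟩, -⟩
    exact h e he (G.core I) (G.core_isHomIdeal I) hne heI

/-- For a regular `S`-graded ring satisfying condition (Δ),
`𝒢(R) = R` iff every homogeneous element of `R` is G-regular. -/
theorem gradedBM_eq_univ_iff (G : SGraded S R) (hreg : G.Regular) (hdelta : G.CondDelta) :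
    G.gradedBM = Set.univ ↔ ∀ x : R, G.Homog x → G.GRegular x :=
  gradedBM_eq_univ_iff_general G hreg
end

section
/- Let R be a regular S-graded ring such that S satisfies condition (Δ), and let x be a nonzero homogeneous element of R. Then x is G-regular if and only if one of the following two conditions holds: (i) δ(x) is not an idempotent element of S; (ii) ε = δ(x) is an idempotent element of S and x is a G-regular element of the ring R_ε. -/
/-!
Common framework: S-graded rings (rings that are direct sums of additive
subgroups indexed by a set S, with homogeneous products homogeneous),
homogeneous ideals, graded modules, and the various Brown--McCoy radicals.
-/

universe u v w

variable {S : Type v} {R : Type w} [NonUnitalRing R]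

/-!
Let `x ∈ R_ε`. If `ε` is not idempotent, then `x² ∉ R_ε`, so in a homogeneous ideal `I` with
`x² - x ∈ I` the `ε`-component `-x` lies in `I`, and a unity modulo `I` lying in `I` forces
`I = R`. If `ε` is idempotent, a unity modulo `I` is a unity modulo the ideal `I ∩ R_ε` of `R_ε`.

Conversely, if `ε` is idempotent and `x` is a unity modulo a proper ideal `I` of `R_ε`, then
`x` is a unity modulo the proper homogeneous subgroup `I ⊕ ⨁_{s ≠ ε} R_s` of `R`, and the crux
is that this is an ideal. A nonzero homogeneous product `ab ∈ R_ε` with a factor outside `R_ε`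
has, by regularity, both factors outside `R_ε`, so by (Δ) one of their degrees, say `σ = δ(a)`,
is idempotent. Then `x·ab = 0`: otherwise regularity puts `xa` in `R_σ` and then `x` in `R_σ`.
Hence `ab = -(x·ab - ab) ∈ I`.
-/

lemma exists_mem_mul_ne_zero_and_mul_ne_zero {H : AddSubgroup R} {a p c q : R}
    (hc : c ∈ H) (hq : q ∈ H) (hac : a * c ≠ 0) (hpq : p * q ≠ 0) :
    ∃ d ∈ H, a * d ≠ 0 ∧ p * d ≠ 0 := by
  by_cases hpc : p * c = 0
  · by_cases haq : a * q = 0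
    · exact ⟨c + q, add_mem hc hq, by simpa [mul_add, haq] using hac,
        by simpa [mul_add, hpc] using hpq⟩
    · exact ⟨q, hq, haq, hpq⟩
  · exact ⟨c, hc, hac, hpc⟩

lemma exists_mem_mul_ne_zero_and_mul_ne_zero' {H : AddSubgroup R} {a p c q : R}
    (hc : c ∈ H) (hq : q ∈ H) (hca : c * a ≠ 0) (hqp : q * p ≠ 0) :
    ∃ d ∈ H, d * a ≠ 0 ∧ d * p ≠ 0 := by
  by_cases hcp : c * p = 0
  · by_cases hqa : q * a = 0
    · exact ⟨c + q, add_mem hc hq, by simpa [add_mul, hqa] using hca,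
        by simpa [add_mul, hcp] using hqp⟩
    · exact ⟨q, hq, hqa, hqp⟩
  · exact ⟨c, hc, hca, hcp⟩

lemma eq_top_of_isUnityMod_of_mem {I : AddSubgroup R} (hI : IsTwoSidedIdeal' I) {x : R}
    (hunit : IsUnityMod x I) (hx : x ∈ I) : I = ⊤ :=
  eq_top_iff.2 fun a _ => by simpa using sub_mem (hI x hx a).1 (hunit a).1

namespace SGraded

def otherComponents (G : SGraded S R) (ε : S) : AddSubgroup R :=
  ⨆ s, ⨆ (_ : s ≠ ε), G.component s

variable {G : SGraded S R}

lemma component_le_otherComponents {s ε : S} (h : s ≠ ε) :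
    G.component s ≤ G.otherComponents ε :=
  le_iSup₂ (f := fun j (_ : j ≠ ε) => G.component j) s h

lemma otherComponents_le {ε : S} {T : AddSubgroup R} (h : ∀ s, s ≠ ε → G.component s ≤ T) :
    G.otherComponents ε ≤ T :=
  iSup₂_le h

lemma disjoint_otherComponents (ε : S) : Disjoint (G.component ε) (G.otherComponents ε) :=
  G.independent ε

lemma degree_unique {a : R} {s t : S} (ha : a ≠ 0)
    (hs : a ∈ G.component s) (ht : a ∈ G.component t) : s = t := by
  by_contra hst
  exact ha (AddSubgroup.disjoint_def.1 (disjoint_otherComponents s) hs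
    (component_le_otherComponents (Ne.symm hst) ht))

lemma mem_otherComponents_of_not_mem {a : R} {ε : S} (ha : G.Homog a)
    (h : a ∉ G.component ε) : a ∈ G.otherComponents ε := by
  obtain ⟨s, hs⟩ := ha
  exact component_le_otherComponents (fun hsε : s = ε => h (hsε ▸ hs)) hs

lemma mem_of_mem_sup_otherComponents {I : AddSubgroup R} {ε : S} {y : R}
    (hI : I ≤ G.component ε) (hy : y ∈ G.component ε) (h : y ∈ I ⊔ G.otherComponents ε) :
    y ∈ I := by
  obtain ⟨i, hi, c, hc, rfl⟩ := AddSubgroup.mem_sup.1 h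
  have hcε : c ∈ G.component ε := by simpa using sub_mem hy (hI hi)
  rwa [AddSubgroup.disjoint_def.1 (disjoint_otherComponents ε) hcε hc, add_zero]

lemma mem_of_forall_component_le {T : AddSubgroup R} (h : ∀ s, G.component s ≤ T) (a : R) :
    a ∈ T :=
  (G.iSup_eq_top ▸ iSup_le h : ⊤ ≤ T) (AddSubgroup.mem_top a)

lemma Homog.mul {a b : R} (ha : G.Homog a) (hb : G.Homog b) : G.Homog (a * b) := by
  obtain ⟨s, hs⟩ := ha
  obtain ⟨t, ht⟩ := hb
  by_cases hab : a * b = 0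
  · exact ⟨s, hab ▸ zero_mem _⟩
  · obtain ⟨u, hu⟩ := G.mul_cond s t ⟨a, hs, b, ht, hab⟩
    exact ⟨u, hu a hs b ht⟩

lemma mul_mem_of_mul_mem {s t u : S} {a b : R} (hab : a * b ≠ 0)
    (ha : a ∈ G.component s) (hb : b ∈ G.component t) (habu : a * b ∈ G.component u)
    {a' b' : R} (ha' : a' ∈ G.component s) (hb' : b' ∈ G.component t) :
    a' * b' ∈ G.component u := by
  obtain ⟨v, hv⟩ := G.mul_cond s t ⟨a, ha, b, hb, hab⟩
  exact degree_unique hab (hv a ha b hb) habu ▸ hv a' ha' b' hb'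

lemma IsHomSubgroup.le_inf_sup_otherComponents {I : AddSubgroup R} (hI : G.IsHomSubgroup I)
    (ε : S) : I ≤ (I ⊓ G.component ε) ⊔ G.otherComponents ε := by
  refine hI.le.trans ((AddSubgroup.closure_le _).2 ?_)
  rintro a ⟨haI, ha⟩
  by_cases haε : a ∈ G.component ε
  · exact AddSubgroup.mem_sup_left ⟨haI, haε⟩
  · exact AddSubgroup.mem_sup_right (mem_otherComponents_of_not_mem ha haε)

lemma IsHomSubgroup.mem_of_add_mem {I : AddSubgroup R} (hI : G.IsHomSubgroup I) {ε : S}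
    {y z : R} (hy : y ∈ G.component ε) (hz : z ∈ G.otherComponents ε) (h : y + z ∈ I) :
    y ∈ I := by
  have hyJ : y ∈ (I ⊓ G.component ε) ⊔ G.otherComponents ε := by
    simpa using sub_mem (hI.le_inf_sup_otherComponents ε h) (AddSubgroup.mem_sup_right hz)
  exact (mem_of_mem_sup_otherComponents inf_le_right hy hyJ).1

lemma isTwoSidedIdeal'_of_homog {J : AddSubgroup R} (hJ : G.IsHomSubgroup J)
    (h : ∀ y ∈ J, G.Homog y → ∀ r, G.Homog r → y * r ∈ J ∧ r * y ∈ J) :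
    IsTwoSidedIdeal' J := by
  have hhom : ∀ y ∈ J, G.Homog y → ∀ r, y * r ∈ J ∧ r * y ∈ J := fun y hy hyh r => by
    simpa using mem_of_forall_component_le (G := G)
      (T := J.comap (AddMonoidHom.mulLeft y) ⊓ J.comap (AddMonoidHom.mulRight y))
      (fun s r hr => by simpa using h y hy hyh r ⟨s, hr⟩) r
  have hle : J ≤ ⨅ r, J.comap (AddMonoidHom.mulRight r) ⊓ J.comap (AddMonoidHom.mulLeft r) := by
    refine hJ.le.trans ((AddSubgroup.closure_le _).2 ?_)
    rintro y ⟨hy, hyh⟩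
    simpa [AddSubgroup.mem_iInf] using hhom y hy hyh
  intro y hy r
  simpa using AddSubgroup.mem_iInf.1 (hle hy) r

lemma Regular.mem_of_mul_right (hreg : G.Regular) {a b c : R} {s u : S} (ha : G.Homog a)
    (hb : b ∈ G.component s) (hc : G.Homog c) (hac : a * c ≠ 0) (hbc : b * c ≠ 0)
    (hacu : a * c ∈ G.component u) (hbcu : b * c ∈ G.component u) : a ∈ G.component s := by
  have hb0 : b ≠ 0 := left_ne_zero_of_mul hbc
  rcases (hreg a b c ha ⟨s, hb⟩ hc (left_ne_zero_of_mul hac) hb0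
      (right_ne_zero_of_mul hac)).1 hac hbc (Or.inr (Or.inr ⟨u, hacu, hbcu⟩)) with
    h | h | ⟨t, hat, hbt⟩
  · exact absurd h (left_ne_zero_of_mul hac)
  · exact absurd h hb0
  · exact degree_unique hb0 hbt hb ▸ hat

lemma Regular.mem_of_mul_left (hreg : G.Regular) {a b c : R} {s u : S} (ha : G.Homog a)
    (hb : b ∈ G.component s) (hc : G.Homog c) (hca : c * a ≠ 0) (hcb : c * b ≠ 0)
    (hcau : c * a ∈ G.component u) (hcbu : c * b ∈ G.component u) : a ∈ G.component s := by
  have hb0 : b ≠ 0 := right_ne_zero_of_mul hcb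
  rcases (hreg a b c ha ⟨s, hb⟩ hc (right_ne_zero_of_mul hca) hb0
      (left_ne_zero_of_mul hca)).2 hca hcb (Or.inr (Or.inr ⟨u, hcau, hcbu⟩)) with
    h | h | ⟨t, hat, hbt⟩
  · exact absurd h (right_ne_zero_of_mul hca)
  · exact absurd h hb0
  · exact degree_unique hb0 hbt hb ▸ hat

lemma IsIdem.mem_of_mul_mem_right (hreg : G.Regular) {σ : S} (hσ : G.IsIdem σ) {a c : R}
    (hc : G.Homog c) (ha : a ∈ G.component σ) (hca : c * a ≠ 0)
    (hmem : c * a ∈ G.component σ) : c ∈ G.component σ := by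
  obtain ⟨⟨p, hp, q, hq, hpq⟩, hσmul⟩ := hσ
  obtain ⟨γ, hcγ⟩ := hc
  obtain ⟨d, hd, hcd, hpd⟩ := exists_mem_mul_ne_zero_and_mul_ne_zero ha hq hca hpq
  exact hreg.mem_of_mul_right ⟨γ, hcγ⟩ hp ⟨σ, hd⟩ hcd hpd
    (mul_mem_of_mul_mem hca hcγ ha hmem hcγ hd) (hσmul p hp d hd)

lemma IsIdem.mem_of_mul_mem_left (hreg : G.Regular) {σ : S} (hσ : G.IsIdem σ) {a c : R}
    (hc : G.Homog c) (ha : a ∈ G.component σ) (hac : a * c ≠ 0)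
    (hmem : a * c ∈ G.component σ) : c ∈ G.component σ := by
  obtain ⟨⟨p, hp, q, hq, hpq⟩, hσmul⟩ := hσ
  obtain ⟨γ, hcγ⟩ := hc
  obtain ⟨d, hd, hdc, hdq⟩ := exists_mem_mul_ne_zero_and_mul_ne_zero' ha hp hac hpq
  exact hreg.mem_of_mul_left ⟨γ, hcγ⟩ hq ⟨σ, hd⟩ hdc hdq
    (mul_mem_of_mul_mem hac ha hcγ hmem hd hcγ) (hσmul d hd q hq)

lemma IsIdem.mul_mul_eq_zero_left (hreg : G.Regular) {σ u : S} (hσ : G.IsIdem σ) {x a b : R}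
    (hx : G.Homog x) (hxσ : x ∉ G.component σ) (ha : a ∈ G.component σ) (hb : G.Homog b)
    (habu : a * b ∈ G.component u) (hxabu : x * (a * b) ∈ G.component u) :
    x * (a * b) = 0 := by
  by_contra hxab
  have hxa : x * a ≠ 0 := fun h => hxab (by rw [← mul_assoc, h, zero_mul])
  have hxaσ : x * a ∈ G.component σ :=
    hreg.mem_of_mul_right (hx.mul ⟨σ, ha⟩) ha hb (by rwa [mul_assoc])
      (right_ne_zero_of_mul hxab) (by rwa [mul_assoc]) habu
  exact hxσ (hσ.mem_of_mul_mem_right hreg hx ha hxa hxaσ)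

lemma IsIdem.mul_mul_eq_zero_right (hreg : G.Regular) {σ u : S} (hσ : G.IsIdem σ) {x a b : R}
    (hx : G.Homog x) (hxσ : x ∉ G.component σ) (hb : b ∈ G.component σ) (ha : G.Homog a)
    (habu : a * b ∈ G.component u) (habxu : a * b * x ∈ G.component u) :
    a * b * x = 0 := by
  by_contra habx
  have hbx : b * x ≠ 0 := fun h => habx (by rw [mul_assoc, h, mul_zero])
  have hbxσ : b * x ∈ G.component σ :=
    hreg.mem_of_mul_left (Homog.mul ⟨σ, hb⟩ hx) hb ha (by rwa [← mul_assoc])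
      (left_ne_zero_of_mul habx) (by rwa [← mul_assoc]) habu
  exact hxσ (hσ.mem_of_mul_mem_left hreg hx hb hbx hbxσ)

lemma mul_mem_of_isUnityModOn (hreg : G.Regular) (hdelta : G.CondDelta) {ε : S}
    (hid : G.IsIdem ε) {x : R} (hx : x ∈ G.component ε) (hx0 : x ≠ 0) {I : AddSubgroup R}
    (hI : IsIdealOn (G.component ε) I)
    (hunit : ∀ a ∈ G.component ε, x * a - a ∈ I ∧ a * x - a ∈ I)
    {a b : R} (ha : G.Homog a) (hb : G.Homog b) (habε : a * b ∈ G.component ε)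
    (hfactor : a ∈ G.component ε → b ∈ G.component ε → a ∈ I ∨ b ∈ I) : a * b ∈ I := by
  by_cases hab : a * b = 0
  · exact hab ▸ zero_mem I
  by_cases haε : a ∈ G.component ε
  · have hbε := hid.mem_of_mul_mem_left hreg hb haε hab habε
    rcases hfactor haε hbε with haI | hbI
    · exact (hI.2 a haI b hbε).1
    · exact (hI.2 b hbI a haε).2
  have hbε : b ∉ G.component ε := fun hbε => haε (hid.mem_of_mul_mem_right hreg ha hbε hab habε)
  obtain ⟨σ, haσ⟩ := ha
  obtain ⟨τ, hbτ⟩ := hb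
  have hxσ : x ∉ G.component σ := fun h => haε (degree_unique hx0 h hx ▸ haσ)
  have hxτ : x ∉ G.component τ := fun h => hbε (degree_unique hx0 h hx ▸ hbτ)
  have hστ : G.IsIdem σ ∨ G.IsIdem τ := by
    by_contra! h
    exact hdelta σ τ ε ⟨a, haσ, b, hbτ, hab⟩ (fun _ ha' _ hb' => mul_mem_of_mul_mem hab haσ hbτ
      habε ha' hb') h.1 h.2 hid
  rcases hστ with hσ | hτ
  · have hxab := hσ.mul_mul_eq_zero_left hreg ⟨ε, hx⟩ hxσ haσ ⟨τ, hbτ⟩ habε (hid.2 x hx _ habε)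
    simpa [hxab] using (hunit _ habε).1
  · have habx := hτ.mul_mul_eq_zero_right hreg ⟨ε, hx⟩ hxτ hbτ ⟨σ, haσ⟩ habε (hid.2 _ habε x hx)
    simpa [habx] using (hunit _ habε).2

lemma isHomSubgroup_sup_otherComponents {ε : S} {I : AddSubgroup R}
    (hI : I ≤ G.component ε) : G.IsHomSubgroup (I ⊔ G.otherComponents ε) := by
  refine le_antisymm (sup_le ?_ (otherComponents_le fun s hs => ?_))
    ((AddSubgroup.closure_le _).2 fun _ h => h.1)
  · exact fun a ha => AddSubgroup.subset_closure ⟨AddSubgroup.mem_sup_left ha, ε, hI ha⟩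
  · exact fun a ha => AddSubgroup.subset_closure
      ⟨AddSubgroup.mem_sup_right (component_le_otherComponents hs ha), s, ha⟩

lemma sup_otherComponents_ne_top {ε : S} {I : AddSubgroup R} (hI : I ≤ G.component ε)
    (hne : I ≠ G.component ε) : I ⊔ G.otherComponents ε ≠ ⊤ := fun htop =>
  hne (le_antisymm hI fun y hy =>
    mem_of_mem_sup_otherComponents hI hy (htop ▸ AddSubgroup.mem_top y))

lemma isTwoSidedIdeal'_sup_otherComponents (hreg : G.Regular) (hdelta : G.CondDelta)
    {ε : S} (hid : G.IsIdem ε) {x : R} (hx : x ∈ G.component ε) (hx0 : x ≠ 0)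
    {I : AddSubgroup R} (hI : IsIdealOn (G.component ε) I)
    (hunit : ∀ a ∈ G.component ε, x * a - a ∈ I ∧ a * x - a ∈ I) :
    IsTwoSidedIdeal' (I ⊔ G.otherComponents ε) := by
  have hmem : ∀ z, G.Homog z → (z ∈ G.component ε → z ∈ I) → z ∈ I ⊔ G.otherComponents ε := by
    intro z hz hzI
    by_cases hzε : z ∈ G.component ε
    · exact AddSubgroup.mem_sup_left (hzI hzε)
    · exact AddSubgroup.mem_sup_right (mem_otherComponents_of_not_mem hz hzε)
  refine isTwoSidedIdeal'_of_homog (isHomSubgroup_sup_otherComponents hI.1) ?_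
  intro y hy hyh r hr
  have hyI : y ∈ G.component ε → y ∈ I := fun hyε => mem_of_mem_sup_otherComponents hI.1 hyε hy
  exact ⟨hmem _ (hyh.mul hr) fun h => mul_mem_of_isUnityModOn hreg hdelta hid hx hx0 hI hunit
      hyh hr h fun hyε _ => Or.inl (hyI hyε),
    hmem _ (hr.mul hyh) fun h => mul_mem_of_isUnityModOn hreg hdelta hid hx hx0 hI hunit
      hr hyh h fun _ hyε => Or.inr (hyI hyε)⟩

lemma isUnityMod_sup_otherComponents {ε : S} {x : R} {I : AddSubgroup R}
    (hJ : IsTwoSidedIdeal' (I ⊔ G.otherComponents ε))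
    (hunit : ∀ a ∈ G.component ε, x * a - a ∈ I ∧ a * x - a ∈ I) :
    IsUnityMod x (I ⊔ G.otherComponents ε) := by
  set J := I ⊔ G.otherComponents ε
  have hcomp : ∀ s, G.component s ≤ J.comap (AddMonoidHom.mulLeft x - AddMonoidHom.id R) ⊓
      J.comap (AddMonoidHom.mulRight x - AddMonoidHom.id R) := by
    intro s z hz
    have hzJ : x * z - z ∈ J ∧ z * x - z ∈ J := by
      by_cases hs : s = ε
      · subst hs
        exact ⟨AddSubgroup.mem_sup_left (hunit z hz).1, AddSubgroup.mem_sup_left (hunit z hz).2⟩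
      · have hz' : z ∈ J := AddSubgroup.mem_sup_right (component_le_otherComponents hs hz)
        exact ⟨sub_mem (hJ z hz' x).2 hz', sub_mem (hJ z hz' x).1 hz'⟩
    simpa using hzJ
  intro a
  simpa using mem_of_forall_component_le hcomp a

lemma gRegularOn_of_gRegular (hreg : G.Regular) (hdelta : G.CondDelta) {ε : S}
    (hid : G.IsIdem ε) {x : R} (hx : x ∈ G.component ε) (hx0 : x ≠ 0) (hG : G.GRegular x) :
    GRegularOn (G.component ε) x := by
  intro I hI hne hunit
  have hJ := isTwoSidedIdeal'_sup_otherComponents hreg hdelta hid hx hx0 hI hunit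
  exact hG _ ⟨hJ, isHomSubgroup_sup_otherComponents hI.1⟩ (sup_otherComponents_ne_top hI.1 hne)
    (isUnityMod_sup_otherComponents hJ hunit)

lemma gRegular_of_not_isIdem {ε : S} {x : R} (hx : x ∈ G.component ε) (hε : ¬ G.IsIdem ε) :
    G.GRegular x := by
  intro I hI hne hunit
  refine hne (eq_top_of_isUnityMod_of_mem hI.1 hunit ?_)
  by_cases hxx : x * x = 0
  · simpa [hxx] using (hunit x).1
  have hxx' : x * x ∈ G.otherComponents ε :=
    mem_otherComponents_of_not_mem (Homog.mul ⟨ε, hx⟩ ⟨ε, hx⟩) fun h =>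
      hε ⟨⟨x, hx, x, hx, hxx⟩, fun _ ha _ hb => mul_mem_of_mul_mem hxx hx hx h ha hb⟩
  have hnegx : -x ∈ I := hI.2.mem_of_add_mem (neg_mem hx) hxx'
    (by simpa [neg_add_eq_sub] using (hunit x).1)
  exact neg_mem_iff.1 hnegx

lemma gRegular_of_gRegularOn {ε : S} (hid : G.IsIdem ε) {x : R} (hx : x ∈ G.component ε)
    (h : GRegularOn (G.component ε) x) : G.GRegular x := by
  intro I hI hne hunit
  refine hne (eq_top_of_isUnityMod_of_mem hI.1 hunit ?_)
  have hIε : IsIdealOn (G.component ε) (I ⊓ G.component ε) :=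
    ⟨inf_le_right, fun z hz r hr => by
      obtain ⟨hzI, hzε⟩ := AddSubgroup.mem_inf.1 hz
      exact ⟨AddSubgroup.mem_inf.2 ⟨(hI.1 z hzI r).1, hid.2 z hzε r hr⟩,
        AddSubgroup.mem_inf.2 ⟨(hI.1 z hzI r).2, hid.2 r hr z hzε⟩⟩⟩
  have hIε_eq : I ⊓ G.component ε = G.component ε := by
    by_contra hne'
    exact h _ hIε hne' fun a ha =>
      ⟨AddSubgroup.mem_inf.2 ⟨(hunit a).1, sub_mem (hid.2 x hx a ha) ha⟩,
        AddSubgroup.mem_inf.2 ⟨(hunit a).2, sub_mem (hid.2 a ha x hx) ha⟩⟩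
  exact inf_eq_right.1 hIε_eq hx

end SGraded

/-- For a regular `S`-graded ring satisfying condition (Δ) and a
nonzero homogeneous `x`, `x` is G-regular iff either the degree of `x` is not
idempotent, or it is some idempotent `ε` and `x` is G-regular in the ring `R_ε`. -/
theorem gRegular_iff (G : SGraded S R) (hreg : G.Regular) (hdelta : G.CondDelta)
    (x : R) (hx : G.Homog x) (hx0 : x ≠ 0) :
    G.GRegular x ↔
      ((∀ ε : S, x ∈ G.component ε → ¬ G.IsIdem ε) ∨
       (∃ ε : S, G.IsIdem ε ∧ x ∈ G.component ε ∧ GRegularOn (G.component ε) x)) := by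
  obtain ⟨ε, hxε⟩ := hx
  constructor
  · intro hG
    by_cases hid : G.IsIdem ε
    · exact Or.inr ⟨ε, hid, hxε, SGraded.gRegularOn_of_gRegular hreg hdelta hid hxε hx0 hG⟩
    · exact Or.inl fun ε' hxε' => SGraded.degree_unique hx0 hxε hxε' ▸ hid
  · rintro (hni | ⟨ε', hid, hxε', hGon⟩)
    · exact SGraded.gRegular_of_not_isIdem hxε (hni ε hxε)
    · exact SGraded.gRegular_of_gRegularOn hid hxε' hGon
end

section
/- Let R be a regular S-graded ring with homogeneous part A such that S satisfies condition (Δ), and let ε ∈ S be an idempotent element. If I is a maximal right ideal of the ring R_ε such that the largest two-sided ideal of R_ε contained in I is a modular two-sided ideal of R_ε, then the right ideal of R generated by the set K = {x ∈ A : for every homogeneous y ∈ R, if xy ∈ R_ε then xy ∈ I} is a homogeneous right ideal of R, maximal among the proper homogeneous right ideals of R, and its core (the largest homogeneous ideal of R contained in it) is a modular homogeneous ideal of R of degree ε. -/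
/-!
Common framework: S-graded rings (rings that are direct sums of additive
subgroups indexed by a set S, with homogeneous products homogeneous),
homogeneous ideals, graded modules, and the various Brown--McCoy radicals.
-/

universe u v w

variable {S : Type v} {R : Type w} [NonUnitalRing R]

/-!
Write `E = R_ε`, let `e ∈ E` be a unity of `E` modulo the core of `I` (so `e ∉ I`), and let
`Q = ⨁_{s ≠ ε} R_s`. Regularity forces `R_s · E` and `E · R_s` (`s ≠ ε`) to meet `E` only in `0`,
since otherwise `e` would fall into `I`; with (Δ), a product of two homogeneous elements of
degrees `≠ ε` that lands in `E` lies in `I`, and the span of all such products is an ideal of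
`E`, hence lies in the core of `I`. Consequently the right ideal generated by `K` is `I ⊕ Q`,
its core is `core(I) ⊕ Q`, and `e` is a unity modulo the latter. A homogeneous right ideal
strictly above `I ⊕ Q` contains an element of `E \ I`, so maximality of `I` in `E` makes it
all of `R`.
-/

section IdealsOn

variable {E J K : AddSubgroup R} {e a : R}

theorem coreOn_le : coreOn E J ≤ J :=
  sSup_le fun _ hK => hK.2

theorem le_coreOn (hK : IsIdealOn E K) (hKJ : K ≤ J) : K ≤ coreOn E J :=
  le_sSup ⟨hK, hKJ⟩

theorem isIdealOn_coreOn : IsIdealOn E (coreOn E J) := by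
  refine ⟨sSup_le fun _ hK => hK.1.1, fun x hx r hr => ⟨?_, ?_⟩⟩
  · have hle : coreOn E J ≤ (coreOn E J).comap (AddMonoidHom.mulRight r) :=
      sSup_le fun L hL y hy => (le_sSup hL : L ≤ coreOn E J) (hL.1.2 y hy r hr).1
    exact hle hx
  · have hle : coreOn E J ≤ (coreOn E J).comap (AddMonoidHom.mulLeft r) :=
      sSup_le fun L hL y hy => (le_sSup hL : L ≤ coreOn E J) (hL.1.2 y hy r hr).2
    exact hle hx

def IsUnityModOn (E J : AddSubgroup R) (e : R) : Prop :=
  ∀ a ∈ E, e * a - a ∈ J ∧ a * e - a ∈ J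

theorem IsUnityModOn.mono (hu : IsUnityModOn E J e) (hJK : J ≤ K) : IsUnityModOn E K e :=
  fun a ha => ⟨hJK (hu a ha).1, hJK (hu a ha).2⟩

theorem IsUnityModOn.mem_of_mul_left_eq_zero (hu : IsUnityModOn E J e) (ha : a ∈ E)
    (h : e * a = 0) : a ∈ J := by
  simpa [h] using (hu a ha).1

theorem IsUnityModOn.mem_of_mul_right_eq_zero (hu : IsUnityModOn E J e) (ha : a ∈ E)
    (h : a * e = 0) : a ∈ J := by
  simpa [h] using (hu a ha).2

theorem IsUnityModOn.notMem (hu : IsUnityModOn E J e) (hJ : IsRightIdealOn E J)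
    (hJE : J ≠ E) : e ∉ J := by
  refine fun heJ => hJE (le_antisymm hJ.1 fun a ha => ?_)
  simpa using sub_mem (hJ.2 e heJ a ha) (hu a ha).1

theorem isIdealOn_closure {W : Set R} (hWE : W ⊆ E)
    (hW : ∀ w ∈ W, ∀ r ∈ E, w * r ∈ W ∧ r * w ∈ W) : IsIdealOn E (AddSubgroup.closure W) := by
  refine ⟨(AddSubgroup.closure_le _).2 hWE, fun x hx r hr => ⟨?_, ?_⟩⟩
  · have hle : AddSubgroup.closure W ≤ (AddSubgroup.closure W).comap (AddMonoidHom.mulRight r) :=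
      (AddSubgroup.closure_le _).2 fun w hw => AddSubgroup.subset_closure (hW w hw r hr).1
    exact hle hx
  · have hle : AddSubgroup.closure W ≤ (AddSubgroup.closure W).comap (AddMonoidHom.mulLeft r) :=
      (AddSubgroup.closure_le _).2 fun w hw => AddSubgroup.subset_closure (hW w hw r hr).2
    exact hle hx

theorem isRightIdealOn_inf {L : AddSubgroup R} (hE : ∀ a ∈ E, ∀ b ∈ E, a * b ∈ E)
    (hL : IsRightIdeal L) : IsRightIdealOn E (L ⊓ E) :=
  ⟨inf_le_right, fun x hx r hr => ⟨hL x hx.1 r, hE x hx.2 r hr⟩⟩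

theorem isIdealOn_inf {L : AddSubgroup R} (hE : ∀ a ∈ E, ∀ b ∈ E, a * b ∈ E)
    (hL : IsTwoSidedIdeal' L) : IsIdealOn E (L ⊓ E) :=
  ⟨inf_le_right, fun x hx r hr =>
    ⟨⟨(hL x hx.1 r).1, hE x hx.2 r hr⟩, ⟨(hL x hx.1 r).2, hE r hr x hx.2⟩⟩⟩

theorem subset_rightIdealGen (T : Set R) : T ⊆ rightIdealGen T :=
  fun _ hx => AddSubgroup.mem_sInf.2 fun _ hJ => hJ.1 hx

theorem rightIdealGen_le {T : Set R} (hT : T ⊆ J) (hJ : IsRightIdeal J) : rightIdealGen T ≤ J :=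
  sInf_le ⟨hT, hJ⟩

end IdealsOn

namespace SGraded

section

variable {G : SGraded S R} {s t u : S} {a b c : R}

theorem eq_of_mem_component (hs : a ∈ G.component s) (ht : a ∈ G.component t) (ha : a ≠ 0) :
    s = t := by
  by_contra hne
  exact ha (AddSubgroup.disjoint_def.mp (G.independent.pairwiseDisjoint hne) hs ht)

theorem exists_mul_mem_component (ha : a ∈ G.component s) (hb : b ∈ G.component t) :
    ∃ u, a * b ∈ G.component u := by
  by_cases h0 : a * b = 0
  · exact ⟨s, h0 ▸ zero_mem _⟩
  obtain ⟨u, hu⟩ := G.mul_cond s t ⟨a, ha, b, hb, h0⟩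
  exact ⟨u, hu a ha b hb⟩

theorem mul_mem_component_of_ne_zero (ha : a ∈ G.component s) (hb : b ∈ G.component t)
    (hab : a * b ∈ G.component u) (h0 : a * b ≠ 0) :
    ∀ x ∈ G.component s, ∀ y ∈ G.component t, x * y ∈ G.component u := by
  obtain ⟨v, hv⟩ := G.mul_cond s t ⟨a, ha, b, hb, h0⟩
  obtain rfl := eq_of_mem_component (hv a ha b hb) hab h0
  exact hv

theorem apply_mem_of_forall_component {f : R →+ R} {T : AddSubgroup R}
    (h : ∀ s, ∀ a ∈ G.component s, f a ∈ T) (a : R) : f a ∈ T := by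
  have hle : ⊤ ≤ T.comap f := G.iSup_eq_top ▸ iSup_le h
  exact hle (AddSubgroup.mem_top a)

theorem eq_top_of_component_le {T : AddSubgroup R} (h : ∀ s, G.component s ≤ T) : T = ⊤ :=
  top_unique (G.iSup_eq_top ▸ iSup_le h)

theorem IsHomSubgroup.le_of_homog {T L : AddSubgroup R} (hT : G.IsHomSubgroup T)
    (h : ∀ a ∈ T, G.Homog a → a ∈ L) : T ≤ L := by
  rw [hT, AddSubgroup.closure_le]
  exact fun a ha => h a ha.1 ha.2

theorem IsHomSubgroup.mul_mem_right {T : AddSubgroup R} (hT : G.IsHomSubgroup T)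
    (h : ∀ x ∈ T, G.Homog x → ∀ s, ∀ r ∈ G.component s, x * r ∈ T) :
    ∀ y ∈ T, ∀ r, y * r ∈ T := fun _ hy r =>
  hT.le_of_homog (L := T.comap (AddMonoidHom.mulRight r))
    (fun x hx hxh => apply_mem_of_forall_component (f := AddMonoidHom.mulLeft x) (h x hx hxh) r)
    hy

theorem IsHomSubgroup.mul_mem_left {T : AddSubgroup R} (hT : G.IsHomSubgroup T)
    (h : ∀ x ∈ T, G.Homog x → ∀ s, ∀ r ∈ G.component s, r * x ∈ T) :
    ∀ y ∈ T, ∀ r, r * y ∈ T := fun _ hy r =>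
  hT.le_of_homog (L := T.comap (AddMonoidHom.mulLeft r))
    (fun x hx hxh => apply_mem_of_forall_component (f := AddMonoidHom.mulRight x) (h x hx hxh) r)
    hy

theorem Regular.eq_of_mul_right (hreg : G.Regular) (ha : a ∈ G.component s)
    (hb : b ∈ G.component t) (hc : G.Homog c) (hac : a * c ≠ 0) (hbc : b * c ≠ 0)
    (hacu : a * c ∈ G.component u) (hbcu : b * c ∈ G.component u) : s = t := by
  have ha0 : a ≠ 0 := by rintro rfl; simp at hac
  have hb0 : b ≠ 0 := by rintro rfl; simp at hbc
  have hc0 : c ≠ 0 := by rintro rfl; simp at hac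
  rcases (hreg a b c ⟨s, ha⟩ ⟨t, hb⟩ hc ha0 hb0 hc0).1 hac hbc (.inr (.inr ⟨u, hacu, hbcu⟩))
    with h | h | ⟨v, hav, hbv⟩
  · exact absurd h ha0
  · exact absurd h hb0
  · exact (eq_of_mem_component ha hav ha0).trans (eq_of_mem_component hbv hb hb0)

theorem Regular.eq_of_mul_left (hreg : G.Regular) (ha : a ∈ G.component s)
    (hb : b ∈ G.component t) (hc : G.Homog c) (hca : c * a ≠ 0) (hcb : c * b ≠ 0)
    (hcau : c * a ∈ G.component u) (hcbu : c * b ∈ G.component u) : s = t := by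
  have ha0 : a ≠ 0 := by rintro rfl; simp at hca
  have hb0 : b ≠ 0 := by rintro rfl; simp at hcb
  have hc0 : c ≠ 0 := by rintro rfl; simp at hca
  rcases (hreg a b c ⟨s, ha⟩ ⟨t, hb⟩ hc ha0 hb0 hc0).2 hca hcb (.inr (.inr ⟨u, hcau, hcbu⟩))
    with h | h | ⟨v, hav, hbv⟩
  · exact absurd h ha0
  · exact absurd h hb0
  · exact (eq_of_mem_component ha hav ha0).trans (eq_of_mem_component hbv hb hb0)

end

section

variable {G : SGraded S R} {ε s t : S} {J L : AddSubgroup R} {x y : R}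

def lift (G : SGraded S R) (ε : S) (J : AddSubgroup R) : AddSubgroup R :=
  J ⊔ ⨆ (s) (_ : s ≠ ε), G.component s

theorem le_lift : J ≤ G.lift ε J := le_sup_left

theorem component_le_lift (hs : s ≠ ε) : G.component s ≤ G.lift ε J :=
  le_sup_of_le_right (le_iSup₂ (f := fun s (_ : s ≠ ε) => G.component s) s hs)

theorem lift_mono (h : J ≤ L) : G.lift ε J ≤ G.lift ε L := sup_le_sup_right h _

theorem mem_lift_of_mem_component (hx : x ∈ G.component s) (h : x ∈ G.component ε → x ∈ J) :
    x ∈ G.lift ε J := by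
  by_cases hs : s = ε
  · subst hs
    exact le_lift (h hx)
  · exact component_le_lift hs hx

theorem mul_mem_lift (hx : x ∈ G.component s) (hy : y ∈ G.component t)
    (h : x * y ∈ G.component ε → x * y ∈ J) : x * y ∈ G.lift ε J :=
  have ⟨_, hxy⟩ := exists_mul_mem_component hx hy
  mem_lift_of_mem_component hxy h

theorem mem_of_mem_lift (hJ : J ≤ G.component ε) (hx : x ∈ G.lift ε J)
    (hxε : x ∈ G.component ε) : x ∈ J := by
  obtain ⟨j, hj, q, hq, rfl⟩ := AddSubgroup.mem_sup.mp hx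
  have hqε : q ∈ G.component ε := by simpa using sub_mem hxε (hJ hj)
  rw [AddSubgroup.disjoint_def.mp (G.independent ε) hqε hq, add_zero]
  exact hj

theorem isHomSubgroup_lift (hJ : J ≤ G.component ε) : G.IsHomSubgroup (G.lift ε J) := by
  refine le_antisymm ?_ ((AddSubgroup.closure_le _).2 fun a ha => ha.1)
  exact sup_le (fun j hj => AddSubgroup.subset_closure ⟨le_lift hj, ε, hJ hj⟩)
    (iSup₂_le fun s hs x hx => AddSubgroup.subset_closure ⟨component_le_lift hs hx, s, hx⟩)

theorem isUnityMod_lift {e : R} (hJ : IsTwoSidedIdeal' (G.lift ε J))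
    (hu : IsUnityModOn (G.component ε) J e) : IsUnityMod e (G.lift ε J) := by
  have key : ∀ t, ∀ a ∈ G.component t, e * a - a ∈ G.lift ε J ∧ a * e - a ∈ G.lift ε J := by
    intro t a ha
    by_cases ht : t = ε
    · subst ht
      exact ⟨le_lift (hu a ha).1, le_lift (hu a ha).2⟩
    · have haJ : a ∈ G.lift ε J := component_le_lift ht ha
      exact ⟨sub_mem (hJ a haJ e).2 haJ, sub_mem (hJ a haJ e).1 haJ⟩
  exact fun a =>
    ⟨apply_mem_of_forall_component (f := AddMonoidHom.mulLeft e - AddMonoidHom.id R)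
      (fun t a ha => (key t a ha).1) a,
    apply_mem_of_forall_component (f := AddMonoidHom.mulRight e - AddMonoidHom.id R)
      (fun t a ha => (key t a ha).2) a⟩

end

section

variable {G : SGraded S R} {ε s t : S} {I : AddSubgroup R} {e x y : R}

theorem mul_eq_zero_of_left_ne (hreg : G.Regular) (hε : G.IsIdem ε) (he : e ∈ G.component ε)
    (heI : e ∉ I) (hu : IsUnityModOn (G.component ε) I e) (hsε : s ≠ ε)
    (hx : x ∈ G.component s) (hy : y ∈ G.component ε) (hxy : x * y ∈ G.component ε) :
    x * y = 0 := by
  by_contra hxy0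
  have hdeg := mul_mem_component_of_ne_zero hx hy hxy hxy0
  have hmem : ∀ w ∈ G.component ε, x * w ≠ 0 → w ∈ I := fun w hw hxw => by
    by_contra hwI
    exact hsε (hreg.eq_of_mul_right hx he ⟨ε, hw⟩ hxw
      (fun h => hwI (hu.mem_of_mul_left_eq_zero hw h)) (hdeg x hx w hw) (hε.2 e he w hw))
  have hxe : x * e = 0 := by_contra fun h => heI (hmem e he h)
  have hye : y + e ∈ I := hmem _ (add_mem hy he) (by rwa [mul_add, hxe, add_zero])
  exact heI (by simpa using sub_mem hye (hmem y hy hxy0))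

theorem mul_eq_zero_of_right_ne (hreg : G.Regular) (hε : G.IsIdem ε) (he : e ∈ G.component ε)
    (heI : e ∉ I) (hu : IsUnityModOn (G.component ε) I e) (htε : t ≠ ε)
    (hx : x ∈ G.component ε) (hy : y ∈ G.component t) (hxy : x * y ∈ G.component ε) :
    x * y = 0 := by
  by_contra hxy0
  have hdeg := mul_mem_component_of_ne_zero hx hy hxy hxy0
  have hmem : ∀ w ∈ G.component ε, w * y ≠ 0 → w ∈ I := fun w hw hwy => by
    by_contra hwI
    exact htε (hreg.eq_of_mul_left hy he ⟨ε, hw⟩ hwy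
      (fun h => hwI (hu.mem_of_mul_right_eq_zero hw h)) (hdeg w hw y hy) (hε.2 w hw e he))
  have hey : e * y = 0 := by_contra fun h => heI (hmem e he h)
  have hxe : x + e ∈ I := hmem _ (add_mem hx he) (by rwa [add_mul, hey, add_zero])
  exact heI (by simpa using sub_mem hxe (hmem x hx hxy0))

theorem mul_mem_of_isIdem_left (hreg : G.Regular) (hε : G.IsIdem ε) (he : e ∈ G.component ε)
    (hu : IsUnityModOn (G.component ε) I e) (hs : G.IsIdem s) (hsε : s ≠ ε)
    (hx : x ∈ G.component s) (hy : y ∈ G.component t) (hxy : x * y ∈ G.component ε) :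
    x * y ∈ I := by
  by_contra hxyI
  have hxy0 : x * y ≠ 0 := fun h => hxyI (h ▸ zero_mem I)
  have hdeg := mul_mem_component_of_ne_zero hx hy hxy hxy0
  have hez : ∀ z ∈ G.component s, z * y ∉ I → e * z ≠ 0 := fun z hz hzy hez =>
    hzy (hu.mem_of_mul_left_eq_zero (hdeg z hz y hy) (by rw [← mul_assoc, hez, zero_mul]))
  obtain ⟨u, hεs⟩ := G.mul_cond ε s ⟨e, he, x, hx, hez x hx hxyI⟩
  have hexy : e * x * y ≠ 0 := by
    rw [mul_assoc]
    exact fun h => hxyI (hu.mem_of_mul_left_eq_zero hxy h)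
  -- cancelling `y` in `x * y` and `(e * x) * y` shows that `e` preserves the degree `s`
  obtain rfl : s = u := hreg.eq_of_mul_right hx (hεs e he x hx) ⟨t, hy⟩ hxy0 hexy hxy
    (by rw [mul_assoc]; exact hε.2 e he _ hxy)
  have hkill : ∀ z ∈ G.component s, z * y ∉ I → ∀ w ∈ G.component s, w * z = 0 :=
    fun z hz hzy w hw => by_contra fun hwz => hsε (hreg.eq_of_mul_right hw he ⟨s, hz⟩ hwz
      (hez z hz hzy) (hs.2 w hw z hz) (hεs e he z hz))
  obtain ⟨p, hp, q, hq, hpq⟩ := hs.1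
  by_cases hqy : q * y ∈ I
  · have hqxy : (q + x) * y ∉ I := fun h => hxyI (by simpa [add_mul] using sub_mem h hqy)
    have := hkill (q + x) (add_mem hq hx) hqxy p hp
    rw [mul_add, hkill x hx hxyI p hp, add_zero] at this
    exact hpq this
  · exact hpq (hkill q hq hqy p hp)

theorem mul_mem_of_isIdem_right (hreg : G.Regular) (hε : G.IsIdem ε) (he : e ∈ G.component ε)
    (hu : IsUnityModOn (G.component ε) I e) (ht : G.IsIdem t) (htε : t ≠ ε)
    (hx : x ∈ G.component s) (hy : y ∈ G.component t) (hxy : x * y ∈ G.component ε) :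
    x * y ∈ I := by
  by_contra hxyI
  have hxy0 : x * y ≠ 0 := fun h => hxyI (h ▸ zero_mem I)
  have hdeg := mul_mem_component_of_ne_zero hx hy hxy hxy0
  have hze : ∀ z ∈ G.component t, x * z ∉ I → z * e ≠ 0 := fun z hz hxz hze =>
    hxz (hu.mem_of_mul_right_eq_zero (hdeg x hx z hz) (by rw [mul_assoc, hze, mul_zero]))
  obtain ⟨u, htε'⟩ := G.mul_cond t ε ⟨y, hy, e, he, hze y hy hxyI⟩
  have hxye : x * (y * e) ≠ 0 := by
    rw [← mul_assoc]
    exact fun h => hxyI (hu.mem_of_mul_right_eq_zero hxy h)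
  obtain rfl : t = u := hreg.eq_of_mul_left hy (htε' y hy e he) ⟨s, hx⟩ hxy0 hxye hxy
    (by rw [← mul_assoc]; exact hε.2 _ hxy e he)
  have hkill : ∀ z ∈ G.component t, x * z ∉ I → ∀ w ∈ G.component t, z * w = 0 :=
    fun z hz hxz w hw => by_contra fun hzw => htε (hreg.eq_of_mul_left hw he ⟨t, hz⟩ hzw
      (hze z hz hxz) (ht.2 z hz w hw) (htε' z hz e he))
  obtain ⟨p, hp, q, hq, hpq⟩ := ht.1
  by_cases hxp : x * p ∈ I
  · have hxpy : x * (p + y) ∉ I := fun h => hxyI (by simpa [mul_add] using sub_mem h hxp)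
    have := hkill (p + y) (add_mem hp hy) hxpy q hq
    rw [add_mul, hkill y hy hxyI q hq, add_zero] at this
    exact hpq this
  · exact hpq (hkill p hp hxp q hq)

theorem mul_mem_of_ne_of_ne (hreg : G.Regular) (hdelta : G.CondDelta) (hε : G.IsIdem ε)
    (he : e ∈ G.component ε) (hu : IsUnityModOn (G.component ε) I e) (hsε : s ≠ ε)
    (htε : t ≠ ε) (hx : x ∈ G.component s) (hy : y ∈ G.component t)
    (hxy : x * y ∈ G.component ε) : x * y ∈ I := by
  by_cases hxy0 : x * y = 0
  · exact hxy0 ▸ zero_mem I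
  by_cases hs : G.IsIdem s
  · exact mul_mem_of_isIdem_left hreg hε he hu hs hsε hx hy hxy
  by_cases ht : G.IsIdem t
  · exact mul_mem_of_isIdem_right hreg hε he hu ht htε hx hy hxy
  exact absurd hε
    (hdelta s t ε ⟨x, hx, y, hy, hxy0⟩ (mul_mem_component_of_ne_zero hx hy hxy hxy0) hs ht)

theorem exists_ne_mul_mem_component_right (hreg : G.Regular) (hε : G.IsIdem ε)
    (he : e ∈ G.component ε) (heI : e ∉ I) (hu : IsUnityModOn (G.component ε) I e)
    (hsε : s ≠ ε) (hx : x ∈ G.component s) (hy : y ∈ G.component ε) :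
    ∃ u ≠ ε, x * y ∈ G.component u := by
  by_cases hxy0 : x * y = 0
  · exact ⟨s, hsε, hxy0 ▸ zero_mem _⟩
  obtain ⟨u, hsu⟩ := G.mul_cond s ε ⟨x, hx, y, hy, hxy0⟩
  refine ⟨u, fun huε => hxy0 ?_, hsu x hx y hy⟩
  exact mul_eq_zero_of_left_ne hreg hε he heI hu hsε hx hy (huε ▸ hsu x hx y hy)

theorem exists_ne_mul_mem_component_left (hreg : G.Regular) (hε : G.IsIdem ε)
    (he : e ∈ G.component ε) (heI : e ∉ I) (hu : IsUnityModOn (G.component ε) I e)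
    (htε : t ≠ ε) (hx : x ∈ G.component ε) (hy : y ∈ G.component t) :
    ∃ u ≠ ε, x * y ∈ G.component u := by
  by_cases hxy0 : x * y = 0
  · exact ⟨t, htε, hxy0 ▸ zero_mem _⟩
  obtain ⟨u, hεt⟩ := G.mul_cond ε t ⟨x, hx, y, hy, hxy0⟩
  refine ⟨u, fun huε => hxy0 ?_, hεt x hx y hy⟩
  exact mul_eq_zero_of_right_ne hreg hε he heI hu htε hx hy (huε ▸ hεt x hx y hy)

/-- The products of two homogeneous elements of degrees `≠ ε` lying in `R_ε` span an ideal of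
`R_ε`, which is contained in `I`. -/
theorem mul_mem_coreOn_of_ne_of_ne (hreg : G.Regular) (hdelta : G.CondDelta)
    (hε : G.IsIdem ε) (he : e ∈ G.component ε) (heI : e ∉ I)
    (hu : IsUnityModOn (G.component ε) I e) (hsε : s ≠ ε) (htε : t ≠ ε)
    (hx : x ∈ G.component s) (hy : y ∈ G.component t) (hxy : x * y ∈ G.component ε) :
    x * y ∈ coreOn (G.component ε) I := by
  let W : Set R := {z | z ∈ G.component ε ∧ ∃ a b, (∃ s ≠ ε, a ∈ G.component s) ∧
    (∃ t ≠ ε, b ∈ G.component t) ∧ a * b = z}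
  have hWI : AddSubgroup.closure W ≤ I := by
    rw [AddSubgroup.closure_le]
    rintro _ ⟨hz, a, b, ⟨s, hs, ha⟩, ⟨t, ht, hb⟩, rfl⟩
    exact mul_mem_of_ne_of_ne hreg hdelta hε he hu hs ht ha hb hz
  have hW : ∀ w ∈ W, ∀ r ∈ G.component ε, w * r ∈ W ∧ r * w ∈ W := by
    rintro _ ⟨hz, a, b, ha, ⟨t, ht, hb⟩, rfl⟩ r hr
    obtain ⟨s, hs, ha⟩ := ha
    obtain ⟨u, huε, hbr⟩ := exists_ne_mul_mem_component_right hreg hε he heI hu ht hb hr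
    obtain ⟨u', hu'ε, hra⟩ := exists_ne_mul_mem_component_left hreg hε he heI hu hs hr ha
    exact ⟨⟨hε.2 _ hz r hr, a, b * r, ⟨s, hs, ha⟩, ⟨u, huε, hbr⟩, (mul_assoc a b r).symm⟩,
      ⟨hε.2 r hr _ hz, r * a, b, ⟨u', hu'ε, hra⟩, ⟨t, ht, hb⟩, mul_assoc r a b⟩⟩
  exact le_coreOn (isIdealOn_closure (fun z hz => hz.1) hW) hWI
    (AddSubgroup.subset_closure ⟨hxy, x, y, ⟨s, hsε, hx⟩, ⟨t, htε, hy⟩, rfl⟩)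

theorem mul_mem_coreOn (hreg : G.Regular) (hdelta : G.CondDelta) (hε : G.IsIdem ε)
    (he : e ∈ G.component ε) (heI : e ∉ I) (hu : IsUnityModOn (G.component ε) I e)
    (hst : s ≠ ε ∨ t ≠ ε) (hx : x ∈ G.component s) (hy : y ∈ G.component t)
    (hxy : x * y ∈ G.component ε) : x * y ∈ coreOn (G.component ε) I := by
  by_cases hsε : s = ε
  · subst hsε
    rw [mul_eq_zero_of_right_ne hreg hε he heI hu (hst.resolve_left (not_not.2 rfl)) hx hy hxy]
    exact zero_mem _
  by_cases htε : t = ε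
  · subst htε
    rw [mul_eq_zero_of_left_ne hreg hε he heI hu hsε hx hy hxy]
    exact zero_mem _
  exact mul_mem_coreOn_of_ne_of_ne hreg hdelta hε he heI hu hsε htε hx hy hxy

theorem mul_mem_of_mem_lift (hreg : G.Regular) (hdelta : G.CondDelta) (hε : G.IsIdem ε)
    (he : e ∈ G.component ε) (heI : e ∉ I) (hu : IsUnityModOn (G.component ε) I e)
    (hI : IsRightIdealOn (G.component ε) I) (hx : x ∈ G.lift ε I) (hxs : x ∈ G.component s)
    (hy : y ∈ G.component t) (hxy : x * y ∈ G.component ε) : x * y ∈ I := by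
  by_cases hst : s = ε ∧ t = ε
  · obtain ⟨rfl, rfl⟩ := hst
    exact hI.2 x (mem_of_mem_lift hI.1 hx hxs) y hy
  · exact coreOn_le (mul_mem_coreOn hreg hdelta hε he heI hu (not_and_or.1 hst) hxs hy hxy)

theorem isRightIdeal_lift (hreg : G.Regular) (hdelta : G.CondDelta) (hε : G.IsIdem ε)
    (he : e ∈ G.component ε) (heI : e ∉ I) (hu : IsUnityModOn (G.component ε) I e)
    (hI : IsRightIdealOn (G.component ε) I) : IsRightIdeal (G.lift ε I) :=
  (isHomSubgroup_lift hI.1).mul_mem_right fun _ hx ⟨_, hxs⟩ _ _ hr =>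
    mul_mem_lift hxs hr (mul_mem_of_mem_lift hreg hdelta hε he heI hu hI hx hxs hr)

theorem rightIdealGen_eq_lift (hreg : G.Regular) (hdelta : G.CondDelta) (hε : G.IsIdem ε)
    (he : e ∈ G.component ε) (heI : e ∉ I) (hu : IsUnityModOn (G.component ε) I e)
    (hI : IsRightIdealOn (G.component ε) I) :
    rightIdealGen {x : R | G.Homog x ∧ ∀ y : R, G.Homog y →
      x * y ∈ G.component ε → x * y ∈ I} = G.lift ε I := by
  refine le_antisymm (rightIdealGen_le ?_ (isRightIdeal_lift hreg hdelta hε he heI hu hI)) ?_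
  · rintro x ⟨⟨s, hxs⟩, hxI⟩
    refine mem_lift_of_mem_component hxs fun hxε => ?_
    simpa using sub_mem (hxI e ⟨ε, he⟩ (hε.2 x hxε e he)) (hu x hxε).2
  · refine (isHomSubgroup_lift hI.1).le_of_homog fun x hx ⟨s, hxs⟩ => subset_rightIdealGen _ ?_
    exact ⟨⟨s, hxs⟩, fun y ⟨_, hy⟩ => mul_mem_of_mem_lift hreg hdelta hε he heI hu hI hx hxs hy⟩

theorem isHomIdeal_lift_coreOn (hreg : G.Regular) (hdelta : G.CondDelta) (hε : G.IsIdem ε)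
    (he : e ∈ G.component ε) (heI : e ∉ I) (hu : IsUnityModOn (G.component ε) I e) :
    G.IsHomIdeal (G.lift ε (coreOn (G.component ε) I)) := by
  have hIc : IsIdealOn (G.component ε) (coreOn (G.component ε) I) := isIdealOn_coreOn
  have hhom := isHomSubgroup_lift hIc.1
  refine ⟨fun x hx r => ⟨hhom.mul_mem_right ?_ x hx r, hhom.mul_mem_left ?_ x hx r⟩, hhom⟩
  · rintro x hx ⟨s, hxs⟩ t r hr
    refine mul_mem_lift hxs hr fun hxr => ?_
    by_cases hst : s = ε ∧ t = ε
    · obtain ⟨rfl, rfl⟩ := hst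
      exact (hIc.2 x (mem_of_mem_lift hIc.1 hx hxs) r hr).1
    · exact mul_mem_coreOn hreg hdelta hε he heI hu (not_and_or.1 hst) hxs hr hxr
  · rintro x hx ⟨s, hxs⟩ t r hr
    refine mul_mem_lift hr hxs fun hrx => ?_
    by_cases hts : t = ε ∧ s = ε
    · obtain ⟨rfl, rfl⟩ := hts
      exact (hIc.2 x (mem_of_mem_lift hIc.1 hx hxs) r hr).2
    · exact mul_mem_coreOn hreg hdelta hε he heI hu (not_and_or.1 hts) hr hxs hrx

theorem core_lift (hε : G.IsIdem ε) (hI : I ≤ G.component ε)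
    (hIc : G.IsHomIdeal (G.lift ε (coreOn (G.component ε) I))) :
    G.core (G.lift ε I) = G.lift ε (coreOn (G.component ε) I) := by
  refine le_antisymm (sSup_le fun L ⟨hL, hLI⟩ => ?_) (le_sSup ⟨hIc, lift_mono coreOn_le⟩)
  refine hL.2.le_of_homog fun a ha ⟨s, has⟩ => mem_lift_of_mem_component has fun haε => ?_
  exact le_coreOn (isIdealOn_inf hε.2 hL.1) (fun b hb => mem_of_mem_lift hI (hLI hb.1) hb.2)
    ⟨ha, haε⟩

theorem isMaxHomRightIdeal_lift (hε : G.IsIdem ε) (hI : IsMaxRightIdealOn (G.component ε) I)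
    (hIR : IsRightIdeal (G.lift ε I)) : G.IsMaxHomRightIdeal (G.lift ε I) := by
  obtain ⟨⟨hIε, -⟩, hIne, hImax⟩ := hI
  refine ⟨⟨hIR, isHomSubgroup_lift hIε⟩, fun htop => hIne ?_, fun L hL hlt => ?_⟩
  · exact le_antisymm hIε fun x hx => mem_of_mem_lift hIε (htop ▸ AddSubgroup.mem_top x) hx
  obtain ⟨z, hzL, ⟨s, hzs⟩, hz⟩ : ∃ z ∈ L, G.Homog z ∧ z ∉ G.lift ε I := by
    by_contra! h
    exact not_le_of_gt hlt (hL.2.le_of_homog h)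
  obtain ⟨hzε, hzI⟩ := Classical.not_imp.1 (mt (mem_lift_of_mem_component hzs) hz)
  have hLε : L ⊓ G.component ε = G.component ε :=
    hImax _ (isRightIdealOn_inf hε.2 hL.1)
      (lt_of_le_of_ne (le_inf (le_lift.trans hlt.le) hIε) fun h => hzI (h ▸ ⟨hzL, hzε⟩))
      inf_le_right
  refine eq_top_of_component_le (G := G) fun t => ?_
  by_cases ht : t = ε
  · exact ht ▸ hLε ▸ inf_le_left
  · exact (component_le_lift ht).trans hlt.le

end

end SGraded

/-- Let `R` be a regular `S`-graded ring satisfying condition (Δ) and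
`ε ∈ S` idempotent. If `I` is a maximal right ideal of `R_ε` whose largest two-sided
ideal is modular, then the right ideal of `R` generated by
`K = {x ∈ A : ∀ homogeneous y, xy ∈ R_ε → xy ∈ I}` is a homogeneous right ideal,
maximal among the proper homogeneous right ideals of `R`, whose core is a modular
homogeneous ideal of `R` of degree `ε`. -/
theorem maxRightIdealOn_lift (G : SGraded S R) (hreg : G.Regular) (hdelta : G.CondDelta)
    (ε : S) (hε : G.IsIdem ε) (I : AddSubgroup R)
    (hI : IsMaxRightIdealOn (G.component ε) I)
    (hmod : IsModularIdealOn (G.component ε) (coreOn (G.component ε) I))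
    (K : AddSubgroup R)
    (hK : K = rightIdealGen {x : R | G.Homog x ∧ ∀ y : R, G.Homog y →
      x * y ∈ G.component ε → x * y ∈ I}) :
    G.IsMaxHomRightIdeal K ∧ G.IsModularHomIdeal (G.core K) ∧
    ∃ e, e ≠ 0 ∧ e ∈ G.component ε ∧ IsUnityMod e (G.core K) := by
  obtain ⟨e, he, hu⟩ := hmod
  have hu : IsUnityModOn (G.component ε) (coreOn (G.component ε) I) e := hu
  have huI : IsUnityModOn (G.component ε) I e := hu.mono coreOn_le
  have heI : e ∉ I := huI.notMem hI.1 hI.2.1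
  have hKI : K = G.lift ε I := hK ▸ SGraded.rightIdealGen_eq_lift hreg hdelta hε he heI huI hI.1
  have hIc := SGraded.isHomIdeal_lift_coreOn hreg hdelta hε he heI huI
  have hcore : G.core K = G.lift ε (coreOn (G.component ε) I) :=
    hKI ▸ SGraded.core_lift hε hI.1.1 hIc
  have hunit : IsUnityMod e (G.core K) := hcore ▸ SGraded.isUnityMod_lift hIc.1 hu
  refine ⟨hKI ▸ SGraded.isMaxHomRightIdeal_lift hε hI ?_, ⟨hcore ▸ hIc, e, ⟨ε, he⟩, hunit⟩,
    e, fun he0 => heI (he0 ▸ zero_mem I), he, hunit⟩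
  exact SGraded.isRightIdeal_lift hreg hdelta hε he heI huI hI.1
end

section
/- Let R be an S-graded ring and let I be a proper modular homogeneous ideal of R with unity e modulo I. Then e ∉ I, e² ≠ 0, e² and e are addable, and the degree δ(e) of e is an idempotent element of S. -/
/-!
Common framework: S-graded rings (rings that are direct sums of additive
subgroups indexed by a set S, with homogeneous products homogeneous),
homogeneous ideals, graded modules, and the various Brown--McCoy radicals.
-/

universe u v w

variable {S : Type v} {R : Type w} [NonUnitalRing R]

/-!
If `e ∈ I` then every `a = e * a - (e * a - a)` lies in `I`, so `e ∉ I`; as `e * e - e ∈ I`,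
also `e * e ≠ 0`. Let `e ∈ R_s` and `R_s · R_s ⊆ R_u`. A homogeneous subgroup contains the
homogeneous components of its elements, so if `u ≠ s` the `s`-component `-e` of `e * e - e`
would lie in `I`. Hence `u = s`, i.e. `s` is idempotent.
-/

theorem AddSubgroup.ne_zero_of_sub_mem_of_notMem {A : Type*} [AddGroup A] {I : AddSubgroup A}
    {x y : A} (hy : y ∉ I) (h : x - y ∈ I) : x ≠ 0 := by
  rintro rfl
  exact hy (by simpa using I.neg_mem h)

theorem IsUnityMod.notMem {e : R} {I : AddSubgroup R} (hu : IsUnityMod e I)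
    (hI : IsRightIdeal I) (hproper : I ≠ ⊤) : e ∉ I := fun heI =>
  hproper <| (AddSubgroup.eq_top_iff' I).2 fun a => by
    simpa using I.sub_mem (hI e heI a) (hu a).1

namespace SGraded

variable (G : SGraded S R)

theorem isInternal [DecidableEq S] : DirectSum.IsInternal G.component :=
  (DirectSum.isInternal_submodule_iff_iSupIndep_and_iSup_eq_top
    fun s => AddSubgroup.toIntSubmodule (G.component s)).2
    ⟨G.independent.map_orderIso AddSubgroup.toIntSubmodule, by
      rw [← OrderIso.map_iSup, G.iSup_eq_top, OrderIso.map_top]⟩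

variable {G}

theorem IsHomSubgroup.mem_of_add_mem_s9 {I : AddSubgroup R} (hI : G.IsHomSubgroup I)
    {s t : S} (hst : s ≠ t) {x y : R} (hx : x ∈ G.component s) (hy : y ∈ G.component t)
    (hxy : x + y ∈ I) : x ∈ I := by
  classical
  let := G.isInternal.chooseDecomposition
  have hdecomp : ∀ z ∈ I, (DirectSum.decompose G.component z s : R) ∈ I := by
    intro z hz
    rw [hI] at hz
    induction hz using AddSubgroup.closure_induction with
    | mem g hg =>
      obtain ⟨hgI, r, hgr⟩ := hg
      by_cases hrs : r = s
      · subst hrs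
        rwa [DirectSum.decompose_of_mem_same _ hgr]
      · rw [DirectSum.decompose_of_mem_ne _ hgr hrs]
        exact I.zero_mem
    | zero => simp
    | add a b _ _ ha hb => simpa using I.add_mem ha hb
    | neg a _ ha =>
      rw [DirectSum.decompose_neg]
      exact I.neg_mem ha
  simpa [DirectSum.decompose_of_mem_same _ hx, DirectSum.decompose_of_mem_ne _ hy hst.symm]
    using hdecomp _ hxy

theorem isIdem_of_mul_self_sub_mem {I : AddSubgroup R} (hI : G.IsHomSubgroup I) {s : S}
    {e : R} (hs : e ∈ G.component s) (he : e ∉ I) (hee : e * e - e ∈ I) : G.IsIdem s := by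
  have hee0 : e * e ≠ 0 := I.ne_zero_of_sub_mem_of_notMem he hee
  obtain ⟨u, hu⟩ := G.mul_cond s s ⟨e, hs, e, hs, hee0⟩
  obtain rfl : u = s := by
    by_contra hus
    refine he (neg_mem_iff.1 (hI.mem_of_add_mem_s9 (Ne.symm hus) (neg_mem hs) (hu e hs e hs) ?_))
    rwa [neg_add_eq_sub]
  exact ⟨⟨e, hs, e, hs, hee0⟩, hu⟩

end SGraded

/-- If `I` is a proper modular homogeneous ideal of an `S`-graded
ring `R` with homogeneous unity `e` modulo `I`, then `e ∉ I`, `e² ≠ 0`, `e²` and `e`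
are addable, and the degree of `e` is an idempotent element of `S`. -/
theorem unityMod_degree_isIdem (G : SGraded S R) (I : AddSubgroup R)
    (hI : G.IsHomIdeal I) (hproper : I ≠ ⊤)
    (e : R) (he : G.Homog e) (hu : IsUnityMod e I) :
    e ∉ I ∧ e * e ≠ 0 ∧ G.Addable (e * e) e ∧ ∀ s : S, e ∈ G.component s → G.IsIdem s := by
  have heI : e ∉ I := hu.notMem (fun x hx r => (hI.1 x hx r).1) hproper
  have hee : e * e - e ∈ I := (hu e).1
  have hidem : ∀ s, e ∈ G.component s → G.IsIdem s := fun s hs =>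
    G.isIdem_of_mul_self_sub_mem hI.2 hs heI hee
  obtain ⟨s, hs⟩ := he
  exact ⟨heI, I.ne_zero_of_sub_mem_of_notMem heI hee,
    .inr (.inr ⟨s, (hidem s hs).2 e hs e hs, hs⟩), hidem⟩
end
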